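/- A ring R is left (ℵ₀,1)-coherent if and only if the left annihilator of every finitely generated right ideal of R is a finitely generated left ideal. -/

import Mathlib

/-!
A cyclic submodule `R x` of `Rⁿ` is the image of `r ↦ r • x : R → Rⁿ`, so it is finitely presented
iff the kernel of that map is finitely generated. The kernel consists of the `r` with `r * xᵢ = 0`
for all `i`, i.e. it is the left annihilator of the right ideal generated by the coordinates of `x`,
and every finitely generated right ideal arises this way (padding generators with `0` so that
`n > 0`).
-/

/-- The left annihilator of a right ideal `B`, as a left ideal of `R`. -/
def leftAnn (R : Type*) [Ring R] (B : Submodule Rᵐᵒᵖ R) : Submodule R R where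
  carrier := {x | ∀ b ∈ B, x * b = 0}
  add_mem' := by
    intro x y hx hy b hb
    rw [add_mul, hx b hb, hy b hb, add_zero]
  zero_mem' := by intro b _; rw [zero_mul]
  smul_mem' := by
    intro c x hx b hb
    rw [smul_eq_mul, mul_assoc, hx b hb, mul_zero]

theorem Submodule.FG.exists_fin_succ_span_range_eq {R M : Type*} [Semiring R] [AddCommMonoid M]
    [Module R M] {N : Submodule R M} (hN : N.FG) :
    ∃ n, ∃ x : Fin (n + 1) → M, Submodule.span R (Set.range x) = N := by
  obtain ⟨n, x, rfl⟩ := Submodule.fg_iff_exists_fin_generating_family.mp hN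
  exact ⟨n, Fin.cons 0 x, by rw [Fin.range_cons, Submodule.span_insert_zero]⟩

theorem Module.finitePresentation_span_singleton_iff {R M : Type*} [Ring R] [AddCommGroup M]
    [Module R M] (x : M) :
    Module.FinitePresentation R (Submodule.span R {x}) ↔
      (LinearMap.ker (LinearMap.toSpanSingleton R M x)).FG := by
  rw [← LinearMap.range_toSpanSingleton, ← LinearMap.ker_rangeRestrict,
    Module.FinitePresentation.fg_ker_iff _ (LinearMap.surjective_rangeRestrict _)]

theorem mem_leftAnn_span_iff {R : Type*} [Ring R] {s : Set R} {r : R} :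
    r ∈ leftAnn R (Submodule.span Rᵐᵒᵖ s) ↔ ∀ b ∈ s, r * b = 0 := by
  refine ⟨fun h b hb ↦ h b (Submodule.subset_span hb), fun h b hb ↦ ?_⟩
  induction hb using Submodule.span_induction with
  | mem b hb => exact h b hb
  | zero => exact mul_zero r
  | add b c _ _ hb hc => rw [mul_add, hb, hc, add_zero]
  | smul c b _ hb => rw [MulOpposite.smul_eq_mul_unop, ← mul_assoc, hb, zero_mul]

theorem ker_toSpanSingleton_eq_leftAnn {R ι : Type*} [Ring R] (x : ι → R) :
    LinearMap.ker (LinearMap.toSpanSingleton R (ι → R) x)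
      = leftAnn R (Submodule.span Rᵐᵒᵖ (Set.range x)) := by
  ext r
  simp only [LinearMap.mem_ker, LinearMap.toSpanSingleton_apply, mem_leftAnn_span_iff,
    Set.forall_mem_range, funext_iff, Pi.smul_apply, smul_eq_mul, Pi.zero_apply]

/-- a ring `R` is left `(ℵ₀,1)`-coherent (every cyclic submodule of
a finite free left module `Rⁿ` is finitely presented) iff the left annihilator of
every finitely generated right ideal of `R` is a finitely generated left ideal. -/
theorem stmt_8 (R : Type*) [Ring R] :
    (∀ n : ℕ, 0 < n → ∀ x : Fin n → R,
        Module.FinitePresentation R (Submodule.span R {x} : Submodule R (Fin n → R))) ↔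
      ∀ B : Submodule Rᵐᵒᵖ R, B.FG → (leftAnn R B).FG := by
  constructor
  · intro H B hB
    obtain ⟨n, x, rfl⟩ := hB.exists_fin_succ_span_range_eq
    rw [← ker_toSpanSingleton_eq_leftAnn, ← Module.finitePresentation_span_singleton_iff]
    exact H (n + 1) n.succ_pos x
  · intro H n _ x
    rw [Module.finitePresentation_span_singleton_iff, ker_toSpanSingleton_eq_leftAnn]
    exact H _ (Submodule.fg_span (Set.finite_range x))
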